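/- Let $P(z) = c\prod_{j=1}^n(z-z_j)$ be a degree-$n$ polynomial with all zeros satisfying $|z_j| \le 1$, and let $\gamma = (\gamma_1,\dots,\gamma_n)$ be nonnegative reals, not all zero, with sum $\Lambda$ and minimum $\gamma_m$. Then for every $z$ with $|z| = 1$, $\left| z\, P(z) \sum_{j=1}^n \frac{\gamma_j}{z - z_j} \right| \ge \left( \frac{\Lambda}{2} + \frac{\gamma_m}{2}\cdot\frac{|a_n| - |a_0|}{|a_n| + |a_0|} \right) |P(z)|$, where $a_n$ and $a_0$ are the leading coefficient and constant term of $P$ (the left side is interpreted as the value of the polynomial $z \cdot c\sum_j \gamma_j \prod_{i\ne j}(z-z_i)$). -/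

import Mathlib

/-!
Write `w Pγ(w) = P(w) ∑ⱼ γⱼ w/(w - zⱼ)`. On the unit circle each `w/(w - zⱼ)` has real part at
least `1/(1 + |zⱼ|) = 1/2 + (1 - |zⱼ|)/(2(1 + |zⱼ|))`; bounding `γⱼ` below by `γm` in the second
part and iterating `(1 - ab)/(1 + ab) ≤ (1 - a)/(1 + a) + (1 - b)/(1 + b)` on `[0, 1]`,
`∑ⱼ (1 - |zⱼ|)/(1 + |zⱼ|) ≥ (1 - ∏ⱼ |zⱼ|)/(1 + ∏ⱼ |zⱼ|) = (|c| - |a₀|)/(|c| + |a₀|)`.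
-/

open Polynomial Finset

lemma one_div_one_add_norm_le_re_div_sub {w ζ : ℂ} (hw : ‖w‖ = 1) (hζ : ‖ζ‖ ≤ 1) (hne : w ≠ ζ) :
    1 / (1 + ‖ζ‖) ≤ (w / (w - ζ)).re := by
  have hw2 : w.re ^ 2 + w.im ^ 2 = 1 := by
    rw [← sq_abs w.re, ← sq_abs w.im]
    simpa [Complex.normSq_apply, sq, hw] using (Complex.sq_norm w).symm
  have hζ2 : ζ.re ^ 2 + ζ.im ^ 2 = ‖ζ‖ ^ 2 := by
    simpa [Complex.normSq_apply, sq] using (Complex.sq_norm ζ).symm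
  set s := w.re * ζ.re + w.im * ζ.im
  -- `s = Re (w * conj ζ)`, so `|s| ≤ ‖ζ‖` by Cauchy–Schwarz
  have hs : -‖ζ‖ ≤ s := by
    nlinarith [sq_nonneg (w.re * ζ.im - w.im * ζ.re), norm_nonneg ζ]
  have hd : 0 < Complex.normSq (w - ζ) := Complex.normSq_pos.mpr (sub_ne_zero.mpr hne)
  rw [Complex.div_re, ← add_div, div_le_div_iff₀ (by positivity) hd, Complex.normSq_apply]
  simp only [Complex.sub_re, Complex.sub_im]
  -- after clearing denominators the claim is `(1 - ‖ζ‖) (‖ζ‖ + s) ≥ 0`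
  nlinarith [mul_nonneg (sub_nonneg.2 hζ) (neg_le_iff_add_nonneg'.mp hs)]

lemma sum_div_one_add_norm_le_norm_sum_mul_div_sub {ι : Type*} (s : Finset ι) {γ : ι → ℝ}
    {z : ι → ℂ} {w : ℂ} (hw : ‖w‖ = 1) (hz : ∀ j ∈ s, ‖z j‖ ≤ 1) (hwz : ∀ j ∈ s, w ≠ z j)
    (hγ : ∀ j ∈ s, 0 ≤ γ j) :
    ∑ j ∈ s, γ j / (1 + ‖z j‖) ≤ ‖∑ j ∈ s, (γ j : ℂ) * (w / (w - z j))‖ := by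
  refine le_trans ?_ (Complex.re_le_norm _)
  rw [Complex.re_sum]
  refine sum_le_sum fun j hj => ?_
  rw [Complex.re_ofReal_mul, div_eq_mul_one_div]
  exact mul_le_mul_of_nonneg_left
    (one_div_one_add_norm_le_re_div_sub hw (hz j hj) (hwz j hj)) (hγ j hj)

lemma one_sub_mul_div_one_add_mul_le {a b : ℝ} (ha0 : 0 ≤ a) (ha1 : a ≤ 1) (hb0 : 0 ≤ b)
    (hb1 : b ≤ 1) :
    (1 - a * b) / (1 + a * b) ≤ (1 - a) / (1 + a) + (1 - b) / (1 + b) := by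
  rw [div_add_div _ _ (by positivity) (by positivity), div_le_div_iff₀ (by positivity) (by positivity)]
  nlinarith [mul_nonneg (mul_nonneg (sub_nonneg.2 ha1) (sub_nonneg.2 hb1))
    (sub_nonneg.2 (mul_le_one₀ ha1 hb0 hb1))]

lemma one_sub_prod_div_one_add_prod_le_sum {ι : Type*} (s : Finset ι) {t : ι → ℝ}
    (h0 : ∀ i ∈ s, 0 ≤ t i) (h1 : ∀ i ∈ s, t i ≤ 1) :
    (1 - ∏ i ∈ s, t i) / (1 + ∏ i ∈ s, t i) ≤ ∑ i ∈ s, (1 - t i) / (1 + t i) := by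
  induction s using Finset.cons_induction with
  | empty => simp
  | cons a s ha ih =>
    simp only [Finset.mem_cons, forall_eq_or_imp] at h0 h1
    rw [Finset.prod_cons, Finset.sum_cons]
    have := ih h0.2 h1.2
    have := one_sub_mul_div_one_add_mul_le h0.1 h1.1 (prod_nonneg h0.2) (prod_le_one h0.2 h1.2)
    linarith

lemma half_sum_add_half_mul_le_sum_div_one_add {ι : Type*} (s : Finset ι) {γ t : ι → ℝ} {γm : ℝ}
    (hγm0 : 0 ≤ γm) (hγm : ∀ i ∈ s, γm ≤ γ i) (ht0 : ∀ i ∈ s, 0 ≤ t i) (ht1 : ∀ i ∈ s, t i ≤ 1) :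
    (∑ i ∈ s, γ i) / 2 + γm / 2 * ((1 - ∏ i ∈ s, t i) / (1 + ∏ i ∈ s, t i)) ≤
      ∑ i ∈ s, γ i / (1 + t i) := by
  have hsplit : ∀ i ∈ s, γ i / (1 + t i) = γ i / 2 + γ i / 2 * ((1 - t i) / (1 + t i)) := by
    intro i hi
    have := ht0 i hi
    field_simp
    ring
  have hterm : ∀ i ∈ s, γm / 2 * ((1 - t i) / (1 + t i)) ≤ γ i / 2 * ((1 - t i) / (1 + t i)) :=
    fun i hi => mul_le_mul_of_nonneg_right (by linarith [hγm i hi])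
      (div_nonneg (by linarith [ht1 i hi]) (by linarith [ht0 i hi]))
  calc (∑ i ∈ s, γ i) / 2 + γm / 2 * ((1 - ∏ i ∈ s, t i) / (1 + ∏ i ∈ s, t i))
      ≤ (∑ i ∈ s, γ i) / 2 + γm / 2 * ∑ i ∈ s, (1 - t i) / (1 + t i) := by
        gcongr
        exact one_sub_prod_div_one_add_prod_le_sum s ht0 ht1
    _ ≤ ∑ i ∈ s, (γ i / 2 + γ i / 2 * ((1 - t i) / (1 + t i))) := by
        rw [sum_add_distrib, ← sum_div, mul_sum]
        exact add_le_add_right (sum_le_sum hterm) _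
    _ = ∑ i ∈ s, γ i / (1 + t i) := (sum_congr rfl hsplit).symm

lemma eval_sum_C_mul_prod_erase {K ι : Type*} [Field K] [Fintype ι] [DecidableEq ι]
    (a z : ι → K) {w : K} (hw : ∀ j, w ≠ z j) :
    (∑ j, C (a j) * ∏ i ∈ univ.erase j, (X - C (z i))).eval w =
      (∏ j, (X - C (z j))).eval w * ∑ j, a j / (w - z j) := by
  simp only [eval_finsetSum, eval_mul, eval_C, eval_prod, eval_sub, eval_X, mul_sum]
  refine sum_congr rfl fun j _ => ?_
  rw [← mul_prod_erase _ _ (mem_univ j)]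
  field_simp [sub_ne_zero.mpr (hw j)]

lemma norm_coeff_zero_C_mul_prod_X_sub_C {K ι : Type*} [NormedField K] [Fintype ι] (c : K)
    (z : ι → K) : ‖(C c * ∏ j, (X - C (z j))).coeff 0‖ = ‖c‖ * ∏ j, ‖z j‖ := by
  simp [coeff_zero_eq_eval_zero, eval_prod, norm_prod]

theorem stmt_12_general (n : ℕ) (c : ℂ) (z : Fin n → ℂ)
    (hz : ∀ j, ‖z j‖ ≤ 1)
    (γ : Fin n → ℝ) (hγ : ∀ j, 0 ≤ γ j)
    (γm : ℝ) (hγm : IsLeast (Set.range γ) γm)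
    (P : Polynomial ℂ) (hP : P = Polynomial.C c * ∏ j, (Polynomial.X - Polynomial.C (z j)))
    (Pγ : Polynomial ℂ)
    (hPγ : Pγ = Polynomial.C c * ∑ j, Polynomial.C (γ j : ℂ) *
      ∏ i ∈ Finset.univ.erase j, (Polynomial.X - Polynomial.C (z i)))
    (w : ℂ) (hw : ‖w‖ = 1) :
    ((∑ j, γ j) / 2 + γm / 2 * ((‖c‖ - ‖P.coeff 0‖) / (‖c‖ + ‖P.coeff 0‖))) * ‖P.eval w‖ ≤
      ‖w * Pγ.eval w‖ := by
  obtain ⟨⟨jm, rfl⟩, hγm_le⟩ := hγm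
  by_cases hPw : P.eval w = 0
  · simp only [hPw, norm_zero, mul_zero]
    positivity
  have hc : c ≠ 0 := by rintro rfl; simp [hP] at hPw
  have hwz : ∀ j, w ≠ z j := by
    rintro j rfl
    exact hPw (by rw [hP, eval_mul, eval_prod, prod_eq_zero (mem_univ j) (by simp), mul_zero])
  have hPγw : w * Pγ.eval w = P.eval w * ∑ j, (γ j : ℂ) * (w / (w - z j)) := by
    rw [hPγ, eval_mul, eval_C, eval_sum_C_mul_prod_erase _ _ hwz, hP, eval_mul, eval_C, mul_sum,
      mul_sum, mul_sum, mul_sum]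
    refine sum_congr rfl fun j _ => ?_
    ring
  have hratio : (‖c‖ - ‖P.coeff 0‖) / (‖c‖ + ‖P.coeff 0‖) =
      (1 - ∏ j, ‖z j‖) / (1 + ∏ j, ‖z j‖) := by
    rw [hP, norm_coeff_zero_C_mul_prod_X_sub_C, ← mul_one_sub, ← mul_one_add,
      mul_div_mul_left _ _ (norm_ne_zero_iff.mpr hc)]
  rw [hratio, hPγw, norm_mul, mul_comm ‖P.eval w‖]
  gcongr
  exact (half_sum_add_half_mul_le_sum_div_one_add univ (hγ jm) (fun j _ => hγm_le ⟨j, rfl⟩)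
    (fun j _ => norm_nonneg _) (fun j _ => hz j)).trans
    (sum_div_one_add_norm_le_norm_sum_mul_div_sub univ hw (fun j _ => hz j) (fun j _ => hwz j)
      (fun j _ => hγ j))

theorem stmt_12 (n : ℕ) (hn : 0 < n) (c : ℂ) (hc : c ≠ 0) (z : Fin n → ℂ)
    (hz : ∀ j, ‖z j‖ ≤ 1)
    (γ : Fin n → ℝ) (hγ : ∀ j, 0 ≤ γ j) (hγ0 : ∃ j, γ j ≠ 0)
    (γm : ℝ) (hγm : IsLeast (Set.range γ) γm)
    (P : Polynomial ℂ) (hP : P = Polynomial.C c * ∏ j, (Polynomial.X - Polynomial.C (z j)))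
    (Pγ : Polynomial ℂ)
    (hPγ : Pγ = Polynomial.C c * ∑ j, Polynomial.C (γ j : ℂ) *
      ∏ i ∈ Finset.univ.erase j, (Polynomial.X - Polynomial.C (z i)))
    (w : ℂ) (hw : ‖w‖ = 1) :
    ((∑ j, γ j) / 2 + γm / 2 * ((‖c‖ - ‖P.coeff 0‖) / (‖c‖ + ‖P.coeff 0‖))) * ‖P.eval w‖ ≤
      ‖w * Pγ.eval w‖ :=
  stmt_12_general n c z hz γ hγ γm hγm P hP Pγ hPγ w hw
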